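/- Let n > 2, let V = 𝔽₂ⁿ, and let g ∈ Sym(V) be such that T ≠ T^g, where T^g = g⁻¹Tg. If W ≤ V is a subspace such that σ_W = T ∩ T^g, then dim(W) ≤ n − 2. -/

import Mathlib

open Equiv

/-- `V n` is the `n`-dimensional vector space over the field with two elements. -/
abbrev V (n : ℕ) : Type := Fin n → ZMod 2

/-- The subgroup `σ_W` of `Sym(V)` consisting of the translations `x ↦ x + w` with `w ∈ W`. -/
def sigmaSub (n : ℕ) (W : Submodule (ZMod 2) (V n)) : Subgroup (Equiv.Perm (V n)) where
  carrier := {g | ∃ v ∈ W, ∀ x, g x = x + v}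
  one_mem' := ⟨0, W.zero_mem, fun x => by simp⟩
  mul_mem' := by
    rintro a b ⟨v, hv, ha⟩ ⟨w, hw, hb⟩
    exact ⟨w + v, W.add_mem hw hv, fun x => by
      simp [Equiv.Perm.mul_apply, ha, hb, add_assoc]⟩
  inv_mem' := by
    rintro a ⟨v, hv, ha⟩
    refine ⟨-v, W.neg_mem hv, fun x => a.injective ?_⟩
    rw [show a (a⁻¹ x) = x from (Equiv.eq_symm_apply a).mp rfl, ha]
    abel

/-- The translation group `T`, i.e. the image of the right regular representation
of `(V, +)` in `Sym(V)`. -/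
def T (n : ℕ) : Subgroup (Equiv.Perm (V n)) := sigmaSub n ⊤

/-- The affine group `AGL(V) = T ⋊ GL(V)`, consisting of the invertible affine
transformations `x ↦ L x + v` of `V`. -/
def AGL (n : ℕ) : Subgroup (Equiv.Perm (V n)) where
  carrier := {g | ∃ (L : V n ≃ₗ[ZMod 2] V n) (v : V n), ∀ x, g x = L x + v}
  one_mem' := ⟨LinearEquiv.refl _ _, 0, fun x => by simp⟩
  mul_mem' := by
    rintro a b ⟨L, v, ha⟩ ⟨M, w, hb⟩
    exact ⟨M ≪≫ₗ L, L w + v, fun x => by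
      simp [Equiv.Perm.mul_apply, ha, hb, map_add, add_assoc]⟩
  inv_mem' := by
    rintro a ⟨L, v, ha⟩
    refine ⟨L.symm, -(L.symm v), fun x => a.injective ?_⟩
    rw [show a (a⁻¹ x) = x from (Equiv.eq_symm_apply a).mp rfl, ha, map_add, map_neg, LinearEquiv.apply_symm_apply,
      LinearEquiv.apply_symm_apply]
    abel

/-- The conjugate subgroup `H^g = g⁻¹ H g`. -/
def conjSub {G : Type*} [Group G] (H : Subgroup G) (g : G) : Subgroup G :=
  H.map (MulAut.conj g⁻¹).toMonoidHom

/-- A subgroup of `Sym(V)` is an elementary abelian regular subgroup if it is an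
elementary abelian 2-group (every element squares to the identity) acting
regularly (sharply transitively) on `V`. -/
def IsElemAbelianRegular (n : ℕ) (R : Subgroup (Equiv.Perm (V n))) : Prop :=
  (∀ r ∈ R, r * r = 1) ∧ ∀ x y : V n, ∃! r : R, (r : Equiv.Perm (V n)) x = y

/-- `A` is a normal subgroup of `B` (as subgroups of a common ambient group). -/
def NormalIn {G : Type*} [Group G] (A B : Subgroup G) : Prop :=
  A ≤ B ∧ ∀ b ∈ B, ∀ a ∈ A, b * a * b⁻¹ ∈ A

/-- `S` is a Sylow `2`-subgroup of `K` (as subgroups of a common ambient group):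
`S` is a `2`-subgroup of `K` maximal among the `2`-subgroups of `K`. -/
def IsSylow2Of {G : Type*} [Group G] (S K : Subgroup G) : Prop :=
  S ≤ K ∧ IsPGroup 2 S ∧ ∀ Q : Subgroup G, Q ≤ K → IsPGroup 2 Q → S ≤ Q → Q = S

/-!
Every element `t` of `T^g` is an involution commuting with `σ_W ≤ T^g`, so `t w = w + t 0` for
`w ∈ W`, and then `t (x + t 0) = x` forces `t x = x + t 0` whenever `x + t 0 ∈ W`. If `W` had
codimension at most one, this would make every `t ∈ T^g` with `t 0 ∉ W` a translation lying in
`T ∩ T^g = σ_W`, which is absurd, so `W = V`; but then every element of `T^g` is a translation and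
`T = T^g`.
-/

section CharTwo

variable {M : Type*} [AddCommGroup M] [Module (ZMod 2) M]

lemma add_self_eq_zero_of_module_zmod_two (x : M) : x + x = 0 := by
  rw [← two_smul (ZMod 2), show (2 : ZMod 2) = 0 from rfl, zero_smul]

lemma Equiv.Perm.eq_addRight_of_commute (W : Set M) {t : Perm M}
    (hcomm : ∀ w ∈ W, Commute t (Equiv.addRight w)) (hinv : t * t = 1)
    (hcov : ∀ x, x ∈ W ∨ x + t 0 ∈ W) : t = Equiv.addRight (t 0) := by
  have hW : ∀ w ∈ W, t w = w + t 0 := fun w hw => by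
    simpa [add_comm] using congr($(hcomm w hw) 0)
  ext x
  rcases hcov x with hx | hx
  · exact hW x hx
  · have hback : t (x + t 0) = x := by
      rw [hW _ hx, add_assoc, add_self_eq_zero_of_module_zmod_two, add_zero]
    simpa [hback] using congr($hinv (x + t 0))

lemma Submodule.mem_or_add_mem_of_finrank_le [FiniteDimensional (ZMod 2) M] (W : Submodule (ZMod 2) M)
    (hW : Module.finrank (ZMod 2) M ≤ Module.finrank (ZMod 2) W + 1) {v : M} (hv : v ∉ W) (x : M) :
    x ∈ W ∨ x + v ∈ W := by
  have hlt : W < W ⊔ span (ZMod 2) {v} :=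
    lt_of_le_of_ne le_sup_left fun h => hv (h ▸ mem_sup_right (mem_span_singleton_self v))
  have htop : W ⊔ span (ZMod 2) {v} = ⊤ := eq_top_of_finrank_eq <|
    le_antisymm (finrank_le _) (hW.trans (finrank_lt_finrank_of_lt hlt))
  obtain ⟨w, hw, z, hz, rfl⟩ := mem_sup.mp (htop ▸ mem_top : x ∈ W ⊔ span (ZMod 2) {v})
  obtain ⟨a, rfl⟩ := mem_span_singleton.mp hz
  rcases (by decide : ∀ a : ZMod 2, a = 0 ∨ a = 1) a with rfl | rfl
  · left; simpa using hw
  · right; rwa [one_smul, add_assoc, add_self_eq_zero_of_module_zmod_two, add_zero]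

end CharTwo

section Conjugate

variable {G : Type*} [Group G] {H : Subgroup G}

lemma mul_self_eq_one_of_mem_conjSub (hH : ∀ h ∈ H, h * h = 1) (g : G) :
    ∀ a ∈ conjSub H g, a * a = 1 := by
  rintro _ ⟨h, hh, rfl⟩
  rw [← map_mul, hH h hh, map_one]

lemma commute_of_mem_conjSub (hH : ∀ a ∈ H, ∀ b ∈ H, Commute a b) (g : G) :
    ∀ a ∈ conjSub H g, ∀ b ∈ conjSub H g, Commute a b := by
  rintro _ ⟨a, ha, rfl⟩ _ ⟨b, hb, rfl⟩
  exact (hH a ha b hb).map _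

end Conjugate

section Translations

variable {n : ℕ}

lemma addRight_mem_sigmaSub_iff {W : Submodule (ZMod 2) (V n)} {v : V n} :
    Equiv.addRight v ∈ sigmaSub n W ↔ v ∈ W := by
  refine ⟨fun ⟨w, hw, h⟩ => ?_, fun hv => ⟨v, hv, fun _ => rfl⟩⟩
  simpa [show v = w by simpa using h 0] using hw

lemma addRight_mem_T (v : V n) : Equiv.addRight v ∈ T n :=
  addRight_mem_sigmaSub_iff.mpr Submodule.mem_top

lemma mul_self_eq_one_of_mem_T : ∀ a ∈ T n, a * a = 1 := by
  rintro a ⟨u, -, ha⟩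
  ext x
  simp [ha, add_assoc, add_self_eq_zero_of_module_zmod_two]

lemma commute_of_mem_T : ∀ a ∈ T n, ∀ b ∈ T n, Commute a b := by
  rintro a ⟨u, -, ha⟩ b ⟨w, -, hb⟩
  ext x
  simp only [Perm.mul_apply, ha, hb, add_right_comm]

lemma exists_mem_conjSub_T_apply_eq (g : Perm (V n)) (x y : V n) :
    ∃ t ∈ conjSub (T n) g, t x = y :=
  ⟨_, ⟨_, addRight_mem_T (g y - g x), rfl⟩, by simp⟩

lemma eq_addRight_of_mem_conjSub_T {g t : Perm (V n)} {W : Submodule (ZMod 2) (V n)}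
    (hW : sigmaSub n W ≤ conjSub (T n) g) (ht : t ∈ conjSub (T n) g)
    (hcov : ∀ x, x ∈ W ∨ x + t 0 ∈ W) : t = Equiv.addRight (t 0) :=
  Perm.eq_addRight_of_commute (W : Set (V n))
    (fun _ hw => commute_of_mem_conjSub commute_of_mem_T g t ht _
      (hW (addRight_mem_sigmaSub_iff.mpr hw)))
    (mul_self_eq_one_of_mem_conjSub mul_self_eq_one_of_mem_T g t ht) hcov

end Translations

theorem finrank_le_of_sigma_eq_inf_conj_general
    (n : ℕ) (g : Equiv.Perm (V n))
    (hg : T n ≠ conjSub (T n) g)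
    (W : Submodule (ZMod 2) (V n))
    (hW : sigmaSub n W = T n ⊓ conjSub (T n) g) :
    Module.finrank (ZMod 2) W ≤ n - 2 := by
  by_contra hlt
  have hcodim : Module.finrank (ZMod 2) (V n) ≤ Module.finrank (ZMod 2) W + 1 := by
    rw [Module.finrank_fin_fun]; omega
  have hWg : sigmaSub n W ≤ conjSub (T n) g := hW.le.trans inf_le_right
  have hWtop : W = ⊤ := by
    by_contra hne
    obtain ⟨v, -, hv⟩ := SetLike.exists_of_lt (lt_top_iff_ne_top.mpr hne)
    obtain ⟨t, ht, ht0⟩ := exists_mem_conjSub_T_apply_eq g 0 v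
    have htv : t = Equiv.addRight v :=
      ht0 ▸ eq_addRight_of_mem_conjSub_T hWg ht (ht0 ▸ W.mem_or_add_mem_of_finrank_le hcodim hv)
    have hvW : Equiv.addRight v ∈ sigmaSub n W := hW ▸ ⟨addRight_mem_T v, htv ▸ ht⟩
    exact hv (addRight_mem_sigmaSub_iff.mp hvW)
  subst hWtop
  refine hg (le_antisymm hWg fun t ht => ?_)
  rw [eq_addRight_of_mem_conjSub_T hWg ht fun _ => Or.inl trivial]
  exact addRight_mem_T (t 0)

/-- If `T ≠ T^g` and `σ_W = T ∩ T^g` for a subspace `W ≤ V`, then `dim W ≤ n - 2`. -/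
theorem finrank_le_of_sigma_eq_inf_conj
    (n : ℕ) (hn : 2 < n) (g : Equiv.Perm (V n))
    (hg : T n ≠ conjSub (T n) g)
    (W : Submodule (ZMod 2) (V n))
    (hW : sigmaSub n W = T n ⊓ conjSub (T n) g) :
    Module.finrank (ZMod 2) W ≤ n - 2 :=
  finrank_le_of_sigma_eq_inf_conj_general n g hg W hW
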